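/- For all n ∈ ℤ and all x ≠ 0, y ≠ 0: (δ_{q^α,x}τ_n)(x,y)·τ'_{n−1}(x,y) − (δ_{q^α,x}τ'_{n−1})(x,y)·τ_n(x,y) = τ_{n−1}(q^α x, y)·τ'_n(x,y). -/

import Mathlib

/-- The q-difference operator in `x`. -/
noncomputable def qdiffX (q α : ℝ) (f : ℝ → ℝ → ℂ) (x y : ℝ) : ℂ :=
  (f x y - f (q ^ α * x) y) / (((1 - q) * x : ℝ) : ℂ)

/-- The q-difference operator in `y`. -/
noncomputable def qdiffY (q β : ℝ) (f : ℝ → ℝ → ℂ) (x y : ℝ) : ℂ :=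
  (f x y - f x (q ^ β * y)) / (((1 - q) * y : ℝ) : ℂ)

/-
With `a = (1 - q) x`, the dispersion relation in `x` reads `f_k(m)(q^α x) = f_k(m) + a f_k(m+1)`,
so after multiplying by `a` the claim is the identity
`τ'_{n-1}(q^α x) τ_n - τ_n(q^α x) τ'_{n-1} = a τ_{n-1}(q^α x) τ'_n` between Casoratians at the
point `(x, y)`. Border the Casoratian matrix of `f_k(n-1), …, f_k(n+N)` by the first row
`((-a)^(N+1-j))_j`: column operations absorb the shift `f(m) ↦ f(m) + a f(m+1)`, so the
determinant and the two corner minors containing that row are the shifted Casoratians, while the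
other two corner minors and the central minor are unshifted ones. The identity is then the Desnanot–Jacobi
identity for this `(N+2) × (N+2)` matrix.
-/

namespace Matrix

variable {R : Type*} [CommRing R]

theorem det_one_updateCol_updateCol {n : Type*} [Fintype n] [DecidableEq n] {i j : n}
    (hij : i ≠ j) (u v : n → R) :
    det (((1 : Matrix n n R).updateCol i u).updateCol j v) = u i * v j - u j * v i := by
  let U : Matrix n (Fin 2) R :=
    of fun k => ![u k - (1 : Matrix n n R) k i, v k - (1 : Matrix n n R) k j]
  let V : Matrix (Fin 2) n R := of ![Pi.single i 1, Pi.single j 1]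
  have hUV : ((1 : Matrix n n R).updateCol i u).updateCol j v = 1 + U * V := by
    ext k l
    simp only [updateCol_apply, add_apply, mul_apply, Fin.sum_univ_two, U, V, of_apply,
      Matrix.cons_val_zero, Matrix.cons_val_one, Pi.single_apply, one_apply]
    by_cases hl : l = j <;> by_cases hl' : l = i <;> simp_all
  rw [hUV, det_one_add_mul_comm, det_fin_two]
  simp [U, V, one_apply, hij, hij.symm]
  ring

theorem det_mul_jacobi_adjugate_minor {n : Type*} [Fintype n] [DecidableEq n]
    (A : Matrix n n R) {c₁ c₂ : n} (hc : c₁ ≠ c₂) (r₁ r₂ : n) :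
    det A * (adjugate A c₁ r₁ * adjugate A c₂ r₂ - adjugate A c₂ r₁ * adjugate A c₁ r₂) =
      det A * (det A *
        det ((A.updateCol c₁ (Pi.single r₁ 1)).updateCol c₂ (Pi.single r₂ 1))) := by
  let B := ((1 : Matrix n n R).updateCol c₁ (adjugate A *ᵥ Pi.single r₁ 1)).updateCol c₂
    (adjugate A *ᵥ Pi.single r₂ 1)
  have hB : det B = adjugate A c₁ r₁ * adjugate A c₂ r₂ - adjugate A c₂ r₁ * adjugate A c₁ r₂ := by
    simp [B, det_one_updateCol_updateCol hc]
  have hAB : A * B = (A.updateCol c₁ (det A • Pi.single r₁ 1)).updateCol c₂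
      (det A • Pi.single r₂ 1) := by
    simp only [B, mul_updateCol, mul_one, mulVec_mulVec, mul_adjugate, smul_mulVec, one_mulVec]
  rw [← hB, ← det_mul, hAB, det_updateCol_smul, updateCol_comm _ hc, det_updateCol_smul,
    updateCol_comm _ hc.symm]

theorem det_updateCol_single {m : ℕ} (A : Matrix (Fin (m + 1)) (Fin (m + 1)) R)
    (i j : Fin (m + 1)) :
    det (A.updateCol j (Pi.single i 1)) =
      (-1) ^ (i + j : ℕ) * det (A.submatrix i.succAbove j.succAbove) := by
  rw [det_succ_column _ j, Finset.sum_eq_single i]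
  · simp
  · exact fun k _ hk => by simp [hk]
  · simp

theorem det_mul_desnanot_jacobi {m : ℕ} (A : Matrix (Fin (m + 2)) (Fin (m + 2)) R) :
    det A * (det A *
        det (A.submatrix (fun k : Fin m => k.castSucc.succ) fun k => k.castSucc.succ)) =
      det A * (det (A.submatrix Fin.castSucc Fin.castSucc) * det (A.submatrix Fin.succ Fin.succ) -
        det (A.submatrix Fin.castSucc Fin.succ) * det (A.submatrix Fin.succ Fin.castSucc)) := by
  have h :=
    det_mul_jacobi_adjugate_minor A (Fin.last_pos.ne' : Fin.last (m + 1) ≠ 0) (Fin.last _) 0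
  have hsub : (A.updateCol (Fin.last _) (Pi.single (Fin.last _) 1)).submatrix Fin.succ Fin.succ =
      (A.submatrix Fin.succ Fin.succ).updateCol (Fin.last _) (Pi.single (Fin.last _) 1) := by
    ext i j
    simp [updateCol_apply, ← Fin.succ_last, Pi.single_apply]
  rw [det_updateCol_single, Fin.succAbove_zero, hsub, det_updateCol_single] at h
  simp [adjugate_fin_succ_eq_det_submatrix, mul_mul_mul_comm _ (det _), ← mul_pow] at h
  exact h.symm

theorem desnanot_jacobi {m : ℕ} (A : Matrix (Fin (m + 2)) (Fin (m + 2)) R) :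
    det A * det (A.submatrix (fun k : Fin m => k.castSucc.succ) fun k => k.castSucc.succ) =
      det (A.submatrix Fin.castSucc Fin.castSucc) * det (A.submatrix Fin.succ Fin.succ) -
        det (A.submatrix Fin.castSucc Fin.succ) * det (A.submatrix Fin.succ Fin.castSucc) := by
  -- cancel `det` for the generic matrix over the domain `ℤ[X_ij]`, then specialise
  let X := mvPolynomialX (Fin (m + 2)) (Fin (m + 2)) ℤ
  let φ :=
    MvPolynomial.eval₂Hom (Int.castRingHom R) fun p : Fin (m + 2) × Fin (m + 2) => A p.1 p.2
  have hφ {k : ℕ} (r c : Fin k → Fin (m + 2)) :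
      φ (det (X.submatrix r c)) = det (A.submatrix r c) := by
    rw [RingHom.map_det, RingHom.mapMatrix_apply, ← submatrix_map]
    exact congrArg (fun M => det (M.submatrix r c)) (mvPolynomialX_map_eval₂ (R := ℤ) _ A)
  have hdet : φ (det X) = det A := by simpa only [submatrix_id_id] using hφ id id
  have hX := mul_left_cancel₀ (det_mvPolynomialX_ne_zero (Fin (m + 2)) ℤ)
    (det_mul_desnanot_jacobi X)
  simpa only [map_mul, map_sub, hφ, hdet] using congrArg φ hX

theorem det_cons_geom_row {M : ℕ} (c t : R) (V : Fin M → Fin (M + 1) → R) :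
    det (of (Fin.cons (fun j : Fin (M + 1) => t * (-c) ^ (M - j : ℕ)) V)) =
      (-1) ^ M * t * det (of fun k j : Fin M => V k j.castSucc + c * V k j.succ) := by
  -- right multiplication by the unipotent `U` adds `c` times column `j + 1` to column `j`,
  -- which clears the first row except for its last entry `t`
  let U : Matrix (Fin (M + 1)) (Fin (M + 1)) R :=
    of fun i j => if i = j then 1 else if (i : ℕ) = j + 1 then c else 0
  have hU : det U = 1 := by
    rw [det_of_isLowerTriangular U fun i j hij => ?_]
    · simp [U]
    · have : (i : ℕ) < j := hij
      simp [U, Fin.ext_iff, this.ne, show (i : ℕ) ≠ j + 1 by omega]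
  have hcol (W : Matrix (Fin (M + 1)) (Fin (M + 1)) R) (i : Fin (M + 1)) (j : Fin M) :
      (W * U) i j.castSucc = W i j.castSucc + c * W i j.succ := by
    rw [mul_apply, Fintype.sum_eq_add j.castSucc j.succ (Fin.castSucc_lt_succ (i := j)).ne
      fun l hl => ?_]
    · simp [U, Fin.ext_iff, mul_comm]
    · have : (l : ℕ) ≠ j + 1 := fun h => hl.2 (Fin.ext h)
      simp [U, hl.1, this]
  set D := of (Fin.cons (fun j : Fin (M + 1) => t * (-c) ^ (M - j : ℕ)) V)
  have hlast : (D * U) 0 (Fin.last M) = t := by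
    rw [mul_apply, Fintype.sum_eq_single (Fin.last M) fun l hl => ?_]
    · simp [D, U]
    · simp [U, hl, (Fin.is_le l).trans_lt M.lt_succ_self |>.ne]
  have hfirst (j : Fin M) : (D * U) 0 j.castSucc = 0 := by
    rw [hcol]
    have : M - j = M - (j + 1) + 1 := by omega
    simp [D, this, pow_succ]
    ring
  calc det D = det (D * U) := by rw [det_mul, hU, mul_one]
    _ = (-1) ^ M * t * det ((D * U).submatrix Fin.succ Fin.castSucc) := by
      rw [det_succ_row_zero, Fintype.sum_eq_single (Fin.last M) fun j hj => ?_]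
      · simp [hlast]
      · obtain ⟨j, rfl⟩ := Fin.exists_castSucc_eq.mpr hj
        simp [hfirst]
    _ = _ := by
      congr 2
      ext k j
      simp [hcol, D]

end Matrix

section Casoratian

open Matrix

variable {R : Type*} [CommRing R]

def casoratian {M : ℕ} (g : Fin M → ℤ → R) (n : ℤ) : R :=
  det (of fun k j : Fin M => g k (n + (j : ℕ)))

theorem det_cons_geom_row_eq_casoratian {M : ℕ} (c t : R) {g g' : Fin M → ℤ → R}
    (hg' : ∀ k m, g' k m = g k m + c * g k (m + 1)) (n : ℤ) :
    det (of (Fin.cons (fun j : Fin (M + 1) => t * (-c) ^ (M - j : ℕ))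
        fun k (j : Fin (M + 1)) => g k (n + (j : ℕ)))) = (-1) ^ M * t * casoratian g' n := by
  rw [det_cons_geom_row, casoratian]
  congr 3
  ext k j
  simp [hg', add_assoc]

theorem casoratian_bilinear_identity {N : ℕ} (c : R) {g g' : Fin (N + 1) → ℤ → R}
    (hg' : ∀ k m, g' k m = g k m + c * g k (m + 1)) (n : ℤ) :
    casoratian g' (n - 1) * casoratian (fun k => g k.castSucc) n -
        casoratian (fun k => g' k.castSucc) n * casoratian g (n - 1) =
      c * casoratian (fun k => g' k.castSucc) (n - 1) * casoratian g n := by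
  let D := of (Fin.cons (fun j : Fin (N + 2) => 1 * (-c) ^ (N + 1 - j : ℕ))
    fun k (j : Fin (N + 2)) => g k (n - 1 + (j : ℕ)))
  have hD := det_cons_geom_row_eq_casoratian c 1 hg' (n - 1)
  have hNW : det (D.submatrix Fin.castSucc Fin.castSucc) =
      (-1) ^ N * (-c) * casoratian (fun k => g' k.castSucc) (n - 1) := by
    rw [← det_cons_geom_row_eq_casoratian c (-c) (fun k m => hg' k.castSucc m)]
    congr 1
    ext i j
    induction i using Fin.cases with
    | zero =>
      have : N + 1 - j = N - j + 1 := by have := j.is_le; omega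
      simp [D, this, pow_succ]
      ring
    | succ i => simp [D]
  have hNE : det (D.submatrix Fin.castSucc Fin.succ) =
      (-1) ^ N * 1 * casoratian (fun k => g' k.castSucc) n := by
    rw [← det_cons_geom_row_eq_casoratian c 1 (fun k m => hg' k.castSucc m)]
    congr 1
    ext i j
    induction i using Fin.cases <;> simp [D]
  have hSE : det (D.submatrix Fin.succ Fin.succ) = casoratian g n := by
    rw [casoratian]; congr 1; ext k j; simp [D]
  have hSW : det (D.submatrix Fin.succ Fin.castSucc) = casoratian g (n - 1) := rfl
  have hint : det (D.submatrix (fun k : Fin N => k.castSucc.succ) fun k => k.castSucc.succ) =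
      casoratian (fun k => g k.castSucc) n := by
    rw [casoratian]; congr 1; ext k j; simp [D]
  have h := desnanot_jacobi D
  rw [hD, hNW, hNE, hSE, hSW, hint] at h
  refine (isUnit_neg_one.pow (N + 1)).mul_left_cancel ?_
  linear_combination h

end Casoratian

theorem stmt_2_general (q α : ℝ) (hq1 : q ≠ 1) (N : ℕ)
    (f : Fin (N + 1) → ℤ → ℝ → ℝ → ℂ)
    (hdx : ∀ (k : Fin (N + 1)) (n : ℤ) (x y : ℝ), x ≠ 0 → y ≠ 0 →
      qdiffX q α (f k n) x y = -f k (n + 1) x y)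
    (τ τ' : ℤ → ℝ → ℝ → ℂ)
    (hτ : ∀ (n : ℤ) (x y : ℝ),
      τ n x y = Matrix.det (Matrix.of fun k j : Fin N => f k.castSucc (n + (j : ℕ)) x y))
    (hτ' : ∀ (n : ℤ) (x y : ℝ),
      τ' n x y = Matrix.det (Matrix.of fun k j : Fin (N + 1) => f k (n + (j : ℕ)) x y)) :
    ∀ (n : ℤ) (x y : ℝ), x ≠ 0 → y ≠ 0 →
      qdiffX q α (τ n) x y * τ' (n - 1) x y - qdiffX q α (τ' (n - 1)) x y * τ n x y
        = τ (n - 1) (q ^ α * x) y * τ' n x y := by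
  obtain rfl : τ = fun n x y => casoratian (fun k m => f k.castSucc m x y) n :=
    funext fun n => funext fun x => funext (hτ n x)
  obtain rfl : τ' = fun n x y => casoratian (fun k m => f k m x y) n :=
    funext fun n => funext fun x => funext (hτ' n x)
  intro n x y hx hy
  have ha : (((1 - q) * x : ℝ) : ℂ) ≠ 0 := by
    exact_mod_cast mul_ne_zero (sub_ne_zero.mpr hq1.symm) hx
  have hshift (k : Fin (N + 1)) (m : ℤ) :
      f k m (q ^ α * x) y = f k m x y + (((1 - q) * x : ℝ) : ℂ) * f k (m + 1) x y := by
    have h := hdx k m x y hx hy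
    rw [qdiffX, div_eq_iff ha] at h
    linear_combination -h
  have key := casoratian_bilinear_identity _ (g := fun k m => f k m x y) hshift n
  rw [qdiffX, qdiffX, div_mul_eq_mul_div, div_mul_eq_mul_div, div_sub_div_same, div_eq_iff ha]
  linear_combination key

/-- Second equation of the bilinear Bäcklund transformation for the bilinear
q-2DTL equation, verified on Casoratian solutions. -/
theorem stmt_2 (q α β : ℝ) (hq : 0 < q) (hq1 : q ≠ 1) (N : ℕ)
    (f : Fin (N + 1) → ℤ → ℝ → ℝ → ℂ)
    (hdx : ∀ (k : Fin (N + 1)) (n : ℤ) (x y : ℝ), x ≠ 0 → y ≠ 0 →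
      qdiffX q α (f k n) x y = -f k (n + 1) x y)
    (hdy : ∀ (k : Fin (N + 1)) (n : ℤ) (x y : ℝ), x ≠ 0 → y ≠ 0 →
      qdiffY q β (f k n) x y = f k (n - 1) x y)
    (τ τ' : ℤ → ℝ → ℝ → ℂ)
    (hτ : ∀ (n : ℤ) (x y : ℝ),
      τ n x y = Matrix.det (Matrix.of fun k j : Fin N => f k.castSucc (n + (j : ℕ)) x y))
    (hτ' : ∀ (n : ℤ) (x y : ℝ),
      τ' n x y = Matrix.det (Matrix.of fun k j : Fin (N + 1) => f k (n + (j : ℕ)) x y)) :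
    ∀ (n : ℤ) (x y : ℝ), x ≠ 0 → y ≠ 0 →
      qdiffX q α (τ n) x y * τ' (n - 1) x y - qdiffX q α (τ' (n - 1)) x y * τ n x y
        = τ (n - 1) (q ^ α * x) y * τ' n x y :=
  stmt_2_general q α hq1 N f hdx τ τ' hτ hτ'
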